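/- arXiv:2104.10282 — 7 statements merged into one kernel-verified Lean document; each statement's English description precedes it below -/
import Mathlib

section
/- For every v ∈ ℝ^q, the optimal value of the norm-minimizing scalarization (P(v)) equals the distance from v to the upper image: inf{‖z‖ : x ∈ X, z ∈ ℝ^q, Γ(x) − z − v ≤_C 0} = inf_{y∈P} ‖v − y‖ = d(v, P). -/
open Set Pointwise

noncomputable section

/-- Dot product on `Fin q → ℝ`. -/
def dotp {q : ℕ} (w y : Fin q → ℝ) : ℝ := ∑ i, w i * y i

/-- `N` is a norm on `Fin q → ℝ`. -/
def IsNormFn {q : ℕ} (N : (Fin q → ℝ) → ℝ) : Prop :=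
  (∀ z, N z = 0 ↔ z = 0) ∧ (∀ (a : ℝ) (z : Fin q → ℝ), N (a • z) = |a| * N z) ∧
    (∀ z w, N (z + w) ≤ N z + N w)

/-- Distance (w.r.t. the norm `N`) from a point to a set. -/
def distFn {q : ℕ} (N : (Fin q → ℝ) → ℝ) (v : Fin q → ℝ) (A : Set (Fin q → ℝ)) : ℝ :=
  sInf ((fun y => N (v - y)) '' A)

/-- the optimal value of the norm-minimizing scalarization (P(v)) equals
the distance from v to the upper image P = Γ(X) + C. -/
theorem stmt2 {q n : ℕ}
    (N : (Fin q → ℝ) → ℝ) (hN : IsNormFn N)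
    (C : Set (Fin q → ℝ))
    (hCclosed : IsClosed C) (hCconv : Convex ℝ C)
    (hCcone : ∀ t : ℝ, 0 ≤ t → ∀ y ∈ C, t • y ∈ C)
    (hCsolid : (interior C).Nonempty)
    (hCpointed : ∀ y ∈ C, -y ∈ C → y = 0)
    (hCnontriv : {(0 : Fin q → ℝ)} ⊂ C ∧ C ⊂ Set.univ)
    (X : Set (Fin n → ℝ)) (hX : IsCompact X) (hXconv : Convex ℝ X)
    (hXint : (interior X).Nonempty)
    (Γ : (Fin n → ℝ) → (Fin q → ℝ)) (hΓ : ContinuousOn Γ X)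
    (hΓconv : ∀ x₁ ∈ X, ∀ x₂ ∈ X, ∀ t : ℝ, t ∈ Icc (0:ℝ) 1 →
      t • Γ x₁ + (1 - t) • Γ x₂ - Γ (t • x₁ + (1 - t) • x₂) ∈ C)
    (v : Fin q → ℝ) :
    sInf {t : ℝ | ∃ x ∈ X, ∃ z : Fin q → ℝ, v + z - Γ x ∈ C ∧ t = N z}
      = distFn N v (Γ '' X + C) := by
  obtain ⟨h0, hhom, _⟩ := hN
  have hneg : ∀ z, N (-z) = N z := by
    intro z
    have := hhom (-1) z
    simpa using this
  unfold distFn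
  congr 1
  ext t
  simp only [Set.mem_setOf_eq, Set.mem_image, Set.mem_add]
  constructor
  · rintro ⟨x, hx, z, hc, rfl⟩
    refine ⟨v + z, ⟨Γ x, ⟨x, hx, rfl⟩, v + z - Γ x, hc, by abel⟩, ?_⟩
    rw [show v - (v + z) = -z by abel, hneg]
  · rintro ⟨y, ⟨a, ⟨x, hx, rfl⟩, c, hc, rfl⟩, rfl⟩
    refine ⟨x, hx, Γ x + c - v, ?_, ?_⟩
    · rw [show v + (Γ x + c - v) - Γ x = c by abel]; exact hc
    · rw [show v - (Γ x + c) = -(Γ x + c - v) by abel, hneg]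
end
end

section
/- For every v ∈ ℝ^q, there exist an optimal solution (x^v, z^v) of (P(v)) and an optimal solution w^v of its Lagrange dual (D(v)), and strong duality holds: there exist x^v ∈ X and z^v ∈ ℝ^q with Γ(x^v) − z^v − v ≤_C 0 and ‖z^v‖ = d(v,P), and there exists w^v ∈ C⁺ with ‖w^v‖_* ≤ 1 such that inf_{x∈X} (w^v)ᵀΓ(x) − (w^v)ᵀv = ‖z^v‖. -/
open Set Pointwise

noncomputable section

/-- Dual norm of `N`. -/
def dualNormFn {q : ℕ} (N : (Fin q → ℝ) → ℝ) (w : Fin q → ℝ) : ℝ :=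
  sSup ((fun z => dotp w z) '' {z | N z ≤ 1})

/-- Dual cone of a set. -/
def dualCone' {q : ℕ} (C : Set (Fin q → ℝ)) : Set (Fin q → ℝ) :=
  {w | ∀ y ∈ C, 0 ≤ dotp w y}

/-! The upper image `P = Γ '' X + C` is convex because `Γ` is `C`-convex, and closed as the sum of
a compact and a closed set; since `y ↦ N (v - y)` is continuous and coercive, `v` has a nearest
point `Γ xv + c` in `P`, which gives the primal solution. For the dual one, separate the open
`N`-ball of radius `d = d(v, P)` around `v` from `P` by a hyperplane; scaled so that its normal `w`
has dual norm at most `1`, it satisfies `wᵀy ≥ wᵀv + d` on `P`. As `P + C ⊆ P`, `w` lies in the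
dual cone, and testing at the nearest point shows the infimum is attained at `xv`. -/

open Filter Matrix

section Dotp

variable {q : ℕ}

@[simp] lemma zero_dotp (y : Fin q → ℝ) : dotp 0 y = 0 := zero_dotProduct y

@[simp] lemma dotp_zero (w : Fin q → ℝ) : dotp w 0 = 0 := dotProduct_zero w

lemma dotp_smul (w y : Fin q → ℝ) (a : ℝ) : dotp w (a • y) = a * dotp w y :=
  dotProduct_smul a w y

lemma dotp_add (w y z : Fin q → ℝ) : dotp w (y + z) = dotp w y + dotp w z :=
  dotProduct_add w y z

lemma dotp_sub (w y z : Fin q → ℝ) : dotp w (y - z) = dotp w y - dotp w z :=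
  dotProduct_sub w y z

lemma smul_dotp (w y : Fin q → ℝ) (a : ℝ) : dotp (a • w) y = a * dotp w y :=
  smul_dotProduct a w y

lemma LinearMap.exists_dotp_eq (f : (Fin q → ℝ) →ₗ[ℝ] ℝ) : ∃ w, ∀ z, dotp w z = f z :=
  ⟨fun i => f fun j => if i = j then 1 else 0, fun z => by
    rw [f.pi_apply_eq_sum_univ z]; simp [dotp, mul_comm]⟩

end Dotp

namespace IsNormFn

variable {q : ℕ} {N : (Fin q → ℝ) → ℝ}

lemma map_zero (hN : IsNormFn N) : N 0 = 0 := (hN.1 0).2 rfl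

lemma map_neg (hN : IsNormFn N) (z : Fin q → ℝ) : N (-z) = N z := by
  simpa using hN.2.1 (-1) z

lemma map_smul_of_nonneg (hN : IsNormFn N) {a : ℝ} (ha : 0 ≤ a) (z : Fin q → ℝ) :
    N (a • z) = a * N z := by
  rw [hN.2.1, abs_of_nonneg ha]

lemma nonneg (hN : IsNormFn N) (z : Fin q → ℝ) : 0 ≤ N z := by
  have h := hN.2.2 z (-z)
  rw [add_neg_cancel, hN.map_zero, hN.map_neg] at h
  linarith

lemma pos (hN : IsNormFn N) {z : Fin q → ℝ} (hz : z ≠ 0) : 0 < N z :=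
  (hN.nonneg z).lt_of_ne fun h => hz ((hN.1 z).1 h.symm)

lemma convexOn (hN : IsNormFn N) : ConvexOn ℝ univ N :=
  ⟨convex_univ, fun x _ y _ a b ha hb _ => by
    simpa only [hN.map_smul_of_nonneg ha, hN.map_smul_of_nonneg hb, smul_eq_mul]
      using hN.2.2 (a • x) (b • y)⟩

lemma continuous (hN : IsNormFn N) : Continuous N :=
  continuousOn_univ.1 (hN.convexOn.continuousOn isOpen_univ)

lemma exists_pos_mul_norm_le (hN : IsNormFn N) : ∃ m > 0, ∀ z, m * ‖z‖ ≤ N z := by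
  cases subsingleton_or_nontrivial (Fin q → ℝ) with
  | inl _ => exact ⟨1, one_pos, fun z => by simp [Subsingleton.elim z 0, hN.map_zero]⟩
  | inr _ =>
    obtain ⟨z₀, hz₀, hmin⟩ := (isCompact_sphere (0 : Fin q → ℝ) 1).exists_isMinOn
      (NormedSpace.sphere_nonempty.2 zero_le_one) hN.continuous.continuousOn
    refine ⟨N z₀, hN.pos (ne_zero_of_mem_unit_sphere ⟨z₀, hz₀⟩), fun z => ?_⟩
    rcases eq_or_ne z 0 with rfl | hz
    · simp [hN.map_zero]
    have hnorm : 0 < ‖z‖ := norm_pos_iff.2 hz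
    have h : N z₀ ≤ N (‖z‖⁻¹ • z) := hmin (by simp [norm_smul, hnorm.ne'])
    rwa [hN.map_smul_of_nonneg (inv_nonneg.2 hnorm.le), le_inv_mul_iff₀ hnorm, mul_comm] at h

lemma tendsto_cocompact_atTop (hN : IsNormFn N) (v : Fin q → ℝ) :
    Tendsto (fun y => N (v - y)) (cocompact _) atTop := by
  obtain ⟨m, hm, hmN⟩ := hN.exists_pos_mul_norm_le
  exact tendsto_atTop_mono (fun y => hmN (v - y)) <| Tendsto.const_mul_atTop hm <|
    tendsto_norm_cocompact_atTop.comp (Homeomorph.subLeft v).isClosedEmbedding.tendsto_cocompact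

lemma exists_isMinOn_of_isClosed (hN : IsNormFn N) (v : Fin q → ℝ) {A : Set (Fin q → ℝ)}
    (hA : IsClosed A) (hne : A.Nonempty) : ∃ p ∈ A, IsMinOn (fun y => N (v - y)) A p := by
  obtain ⟨y₀, hy₀⟩ := hne
  exact (hN.continuous.comp (continuous_const.sub continuous_id)).continuousOn.exists_isMinOn'
    hA hy₀ (((hN.tendsto_cocompact_atTop v).eventually_ge_atTop _).filter_mono inf_le_left)

lemma dotp_le (hN : IsNormFn N) {w : Fin q → ℝ} (hw : ∀ z, N z ≤ 1 → dotp w z ≤ 1)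
    (z : Fin q → ℝ) : dotp w z ≤ N z := by
  rcases eq_or_ne z 0 with rfl | hz
  · simp [hN.map_zero]
  have hNz := hN.pos hz
  have h := hw ((N z)⁻¹ • z) <| by
    rw [hN.map_smul_of_nonneg (inv_nonneg.2 hNz.le), inv_mul_cancel₀ hNz.ne']
  rwa [dotp_smul, inv_mul_le_iff₀ hNz, mul_one] at h

lemma exists_separating_dotp (hN : IsNormFn N) {P : Set (Fin q → ℝ)} (hP : Convex ℝ P)
    {v : Fin q → ℝ} {d : ℝ} (hd : 0 ≤ d) (hfar : ∀ y ∈ P, d ≤ N (v - y)) :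
    ∃ w, (∀ z, N z ≤ 1 → dotp w z ≤ 1) ∧ ∀ y ∈ P, dotp w v + d ≤ dotp w y := by
  rcases hd.eq_or_lt with rfl | hd
  · exact ⟨0, by simp, by simp⟩
  set U := {u | N (v - u) < d}
  have hUopen : IsOpen U :=
    isOpen_lt (hN.continuous.comp (continuous_const.sub continuous_id)) continuous_const
  have hUconv : Convex ℝ U := by
    have hU : U = -((fun x => v + x) ⁻¹' {x ∈ univ | N x < d}) := by
      ext u; simp [U, sub_eq_add_neg]
    exact hU ▸ ((hN.convexOn.convex_lt d).translate_preimage_right v).neg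
  have hUP : Disjoint U P := disjoint_left.2 fun u hu huP => (hfar u huP).not_gt hu
  obtain ⟨f, α, hfU, hfP⟩ := geometric_hahn_banach_open hUconv hUopen hP hUP
  obtain ⟨w₀, hw₀⟩ : ∃ w₀, ∀ z, dotp w₀ z = f z := LinearMap.exists_dotp_eq f.toLinearMap
  have hgap : 0 < α - f v := sub_pos.2 (hfU v (by simpa [U, hN.map_zero] using hd))
  have hunit : ∀ z, N z ≤ 1 → d * f z ≤ α - f v := by
    intro z hz
    refine (le_iff_forall_one_lt_le_mul₀ hgap.le).2 fun ε hε => ?_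
    have hε₀ : 0 < ε := one_pos.trans hε
    have hmem : v + (d / ε) • z ∈ U := by
      show N (v - (v + (d / ε) • z)) < d
      rw [sub_add_cancel_left, hN.map_neg, hN.map_smul_of_nonneg (by positivity)]
      calc d / ε * N z ≤ d / ε := mul_le_of_le_one_right (by positivity) hz
        _ < d := div_lt_self hd hε
    have h := hfU _ hmem
    rw [map_add, map_smul, smul_eq_mul, div_mul_eq_mul_div, ← lt_sub_iff_add_lt',
      div_lt_iff₀ hε₀] at h
    exact h.le
  refine ⟨(d / (α - f v)) • w₀, fun z hz => ?_, fun y hy => ?_⟩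
  · rw [smul_dotp, hw₀, div_mul_eq_mul_div, div_le_one hgap]
    exact hunit z hz
  · rw [smul_dotp, smul_dotp, hw₀, hw₀, div_mul_eq_mul_div, div_mul_eq_mul_div,
      div_add' _ _ _ hgap.ne', div_le_div_iff_of_pos_right hgap]
    nlinarith [hfP y hy]

end IsNormFn

lemma distFn_eq_of_isMinOn {q : ℕ} {N : (Fin q → ℝ) → ℝ} {v p : Fin q → ℝ}
    {A : Set (Fin q → ℝ)} (hp : p ∈ A) (hmin : IsMinOn (fun y => N (v - y)) A p) :
    distFn N v A = N (v - p) :=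
  IsLeast.csInf_eq ⟨mem_image_of_mem _ hp, by rintro _ ⟨y, hy, rfl⟩; exact hmin hy⟩

lemma dualNormFn_le_one {q : ℕ} {N : (Fin q → ℝ) → ℝ} {w : Fin q → ℝ}
    (hw : ∀ z, N z ≤ 1 → dotp w z ≤ 1) : dualNormFn N w ≤ 1 :=
  Real.sSup_le (by rintro _ ⟨z, hz, rfl⟩; exact hw z hz) zero_le_one

section UpperImage

variable {E F : Type*} [AddCommGroup E] [Module ℝ E] [AddCommGroup F] [Module ℝ F]
  {C : Set F}

lemma add_mem_of_convex_of_smul_mem (hCconv : Convex ℝ C)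
    (hCcone : ∀ t : ℝ, 0 ≤ t → ∀ y ∈ C, t • y ∈ C) {a b : F} (ha : a ∈ C) (hb : b ∈ C) :
    a + b ∈ C := by
  have h := hCcone 2 zero_le_two _ (hCconv ha hb (by norm_num : (0 : ℝ) ≤ 1 / 2)
    (by norm_num : (0 : ℝ) ≤ 1 / 2) (by norm_num))
  rwa [smul_add, smul_smul, smul_smul, show (2 : ℝ) * (1 / 2) = 1 by norm_num, one_smul,
    one_smul] at h

lemma convex_image_add_cone {X : Set E} {Γ : E → F} (hXconv : Convex ℝ X)
    (hCconv : Convex ℝ C) (hCcone : ∀ t : ℝ, 0 ≤ t → ∀ y ∈ C, t • y ∈ C)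
    (hΓconv : ∀ x₁ ∈ X, ∀ x₂ ∈ X, ∀ t : ℝ, t ∈ Icc (0:ℝ) 1 →
      t • Γ x₁ + (1 - t) • Γ x₂ - Γ (t • x₁ + (1 - t) • x₂) ∈ C) :
    Convex ℝ (Γ '' X + C) := by
  rintro _ ⟨_, ⟨x₁, hx₁, rfl⟩, c₁, hc₁, rfl⟩ _ ⟨_, ⟨x₂, hx₂, rfl⟩, c₂, hc₂, rfl⟩ a b ha hb hab
  obtain rfl : b = 1 - a := eq_sub_of_add_eq' hab
  refine ⟨Γ (a • x₁ + (1 - a) • x₂), mem_image_of_mem _ (hXconv hx₁ hx₂ ha hb hab),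
    (a • Γ x₁ + (1 - a) • Γ x₂ - Γ (a • x₁ + (1 - a) • x₂)) + (a • c₁ + (1 - a) • c₂),
    add_mem_of_convex_of_smul_mem hCconv hCcone (hΓconv x₁ hx₁ x₂ hx₂ a ⟨ha, by linarith⟩)
      (add_mem_of_convex_of_smul_mem hCconv hCcone (hCcone a ha c₁ hc₁)
        (hCcone (1 - a) hb c₂ hc₂)), by simp only; module⟩

end UpperImage

lemma mem_dualCone'_of_forall_le {q : ℕ} {C : Set (Fin q → ℝ)}
    (hCcone : ∀ t : ℝ, 0 ≤ t → ∀ y ∈ C, t • y ∈ C) {w y : Fin q → ℝ} {β : ℝ}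
    (h : ∀ c ∈ C, β ≤ dotp w (y + c)) : w ∈ dualCone' C := by
  intro c hc
  by_contra! hneg
  have hβ := h 0 (by simpa using hCcone 0 le_rfl c hc)
  rw [add_zero] at hβ
  have ht : 0 ≤ (dotp w y - β + 1) / -dotp w c := div_nonneg (by linarith) (by linarith)
  have h' := h _ (hCcone _ ht c hc)
  rw [dotp_add, dotp_smul, div_mul_eq_mul_div, div_neg, mul_div_cancel_right₀ _ hneg.ne] at h'
  linarith

lemma sInf_image_dotp_sub_dotp_eq {q n : ℕ} {N : (Fin q → ℝ) → ℝ} (hN : IsNormFn N)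
    {C : Set (Fin q → ℝ)} {X : Set (Fin n → ℝ)} {Γ : (Fin n → ℝ) → (Fin q → ℝ)}
    {v w c : Fin q → ℝ} {x₀ : Fin n → ℝ} (hx₀ : x₀ ∈ X) (hc : c ∈ C) (hwC : w ∈ dualCone' C)
    (hw : ∀ z, N z ≤ 1 → dotp w z ≤ 1)
    (hlow : ∀ x ∈ X, dotp w v + N (Γ x₀ + c - v) ≤ dotp w (Γ x)) :
    sInf ((fun x => dotp w (Γ x)) '' X) - dotp w v = N (Γ x₀ + c - v) := by
  have hx₀_eq : dotp w (Γ x₀) = dotp w v + N (Γ x₀ + c - v) := by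
    refine le_antisymm ?_ (hlow x₀ hx₀)
    calc dotp w (Γ x₀) ≤ dotp w (Γ x₀) + dotp w c := le_add_of_nonneg_right (hwC c hc)
      _ = dotp w v + dotp w (Γ x₀ + c - v) := by rw [dotp_sub, dotp_add]; ring
      _ ≤ dotp w v + N (Γ x₀ + c - v) := (add_le_add_iff_left _).2 (hN.dotp_le hw _)
  have hleast : IsLeast ((fun x => dotp w (Γ x)) '' X) (dotp w (Γ x₀)) :=
    ⟨mem_image_of_mem _ hx₀, by rintro _ ⟨x, hx, rfl⟩; exact hx₀_eq ▸ hlow x hx⟩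
  rw [hleast.csInf_eq, hx₀_eq, add_sub_cancel_left]

theorem stmt3_general {q n : ℕ}
    (N : (Fin q → ℝ) → ℝ) (hN : IsNormFn N)
    (C : Set (Fin q → ℝ))
    (hCclosed : IsClosed C) (hCconv : Convex ℝ C)
    (hCcone : ∀ t : ℝ, 0 ≤ t → ∀ y ∈ C, t • y ∈ C)
    (hCnontriv : {(0 : Fin q → ℝ)} ⊂ C ∧ C ⊂ Set.univ)
    (X : Set (Fin n → ℝ)) (hX : IsCompact X) (hXconv : Convex ℝ X)
    (hXint : (interior X).Nonempty)
    (Γ : (Fin n → ℝ) → (Fin q → ℝ)) (hΓ : ContinuousOn Γ X)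
    (hΓconv : ∀ x₁ ∈ X, ∀ x₂ ∈ X, ∀ t : ℝ, t ∈ Icc (0:ℝ) 1 →
      t • Γ x₁ + (1 - t) • Γ x₂ - Γ (t • x₁ + (1 - t) • x₂) ∈ C)
    (v : Fin q → ℝ) :
    ∃ xv ∈ X, ∃ zv : Fin q → ℝ,
      v + zv - Γ xv ∈ C ∧ N zv = distFn N v (Γ '' X + C) ∧
      ∃ wv ∈ dualCone' C, dualNormFn N wv ≤ 1 ∧
        sInf ((fun x => dotp wv (Γ x)) '' X) - dotp wv v = N zv := by
  have h0C : (0 : Fin q → ℝ) ∈ C := hCnontriv.1.1 rfl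
  have hmem : ∀ x ∈ X, ∀ c ∈ C, Γ x + c ∈ Γ '' X + C :=
    fun x hx c hc => ⟨Γ x, mem_image_of_mem Γ hx, c, hc, rfl⟩
  obtain ⟨_, ⟨_, ⟨xv, hxv, rfl⟩, c, hc, rfl⟩, hmin⟩ := hN.exists_isMinOn_of_isClosed v
    (hCclosed.add_left_of_isCompact (hX.image_of_continuousOn hΓ))
    (((hXint.mono interior_subset).image Γ).add ⟨0, h0C⟩)
  obtain ⟨w, hw, hsep⟩ := hN.exists_separating_dotp
    (convex_image_add_cone hXconv hCconv hCcone hΓconv) (hN.nonneg _) fun y hy => hmin hy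
  have hd : N (v - (Γ xv + c)) = N (Γ xv + c - v) := by rw [← hN.map_neg, neg_sub]
  have hwC : w ∈ dualCone' C :=
    mem_dualCone'_of_forall_le hCcone fun c' hc' => hsep _ (hmem xv hxv c' hc')
  refine ⟨xv, hxv, Γ xv + c - v, by simpa using hc, ?_, w, hwC, dualNormFn_le_one hw,
    sInf_image_dotp_sub_dotp_eq hN hxv hc hwC hw fun x hx => ?_⟩
  · rw [distFn_eq_of_isMinOn (hmem xv hxv c hc) hmin, hd]
  · simpa [hd] using hsep _ (hmem x hx 0 h0C)

/-- existence of optimal solutions of (P(v)) and (D(v)) and strong duality. -/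
theorem stmt3 {q n : ℕ}
    (N : (Fin q → ℝ) → ℝ) (hN : IsNormFn N)
    (C : Set (Fin q → ℝ))
    (hCclosed : IsClosed C) (hCconv : Convex ℝ C)
    (hCcone : ∀ t : ℝ, 0 ≤ t → ∀ y ∈ C, t • y ∈ C)
    (hCsolid : (interior C).Nonempty)
    (hCpointed : ∀ y ∈ C, -y ∈ C → y = 0)
    (hCnontriv : {(0 : Fin q → ℝ)} ⊂ C ∧ C ⊂ Set.univ)
    (X : Set (Fin n → ℝ)) (hX : IsCompact X) (hXconv : Convex ℝ X)
    (hXint : (interior X).Nonempty)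
    (Γ : (Fin n → ℝ) → (Fin q → ℝ)) (hΓ : ContinuousOn Γ X)
    (hΓconv : ∀ x₁ ∈ X, ∀ x₂ ∈ X, ∀ t : ℝ, t ∈ Icc (0:ℝ) 1 →
      t • Γ x₁ + (1 - t) • Γ x₂ - Γ (t • x₁ + (1 - t) • x₂) ∈ C)
    (v : Fin q → ℝ) :
    ∃ xv ∈ X, ∃ zv : Fin q → ℝ,
      v + zv - Γ xv ∈ C ∧ N zv = distFn N v (Γ '' X + C) ∧
      ∃ wv ∈ dualCone' C, dualNormFn N wv ≤ 1 ∧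
        sInf ((fun x => dotp wv (Γ x)) '' X) - dotp wv v = N zv :=
  stmt3_general N hN C hCclosed hCconv hCcone hCnontriv X hX hXconv hXint Γ hΓ hΓconv v
end
end

section
/- Let v ∈ ℝ^q with v ∉ int P, and let (x^v, z^v) be an optimal solution of (P(v)). Then x^v is a weak minimizer of (P), i.e., Γ(x^v) is weakly C-minimal in Γ(X), and y^v := v + z^v is a weakly C-minimal element of P, i.e., ({y^v} − int C) ∩ P = ∅. -/
open Set Pointwise

noncomputable section

/-- if `v ∉ int P` and (xv, zv) is optimal for (P(v)), then xv is a
weak minimizer of (P) and `v + zv` is weakly C-minimal in P. -/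
theorem stmt6 {q n : ℕ}
    (N : (Fin q → ℝ) → ℝ) (hN : IsNormFn N)
    (C : Set (Fin q → ℝ))
    (hCclosed : IsClosed C) (hCconv : Convex ℝ C)
    (hCcone : ∀ t : ℝ, 0 ≤ t → ∀ y ∈ C, t • y ∈ C)
    (hCsolid : (interior C).Nonempty)
    (hCpointed : ∀ y ∈ C, -y ∈ C → y = 0)
    (hCnontriv : {(0 : Fin q → ℝ)} ⊂ C ∧ C ⊂ Set.univ)
    (X : Set (Fin n → ℝ)) (hX : IsCompact X) (hXconv : Convex ℝ X)
    (hXint : (interior X).Nonempty)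
    (Γ : (Fin n → ℝ) → (Fin q → ℝ)) (hΓ : ContinuousOn Γ X)
    (hΓconv : ∀ x₁ ∈ X, ∀ x₂ ∈ X, ∀ t : ℝ, t ∈ Icc (0:ℝ) 1 →
      t • Γ x₁ + (1 - t) • Γ x₂ - Γ (t • x₁ + (1 - t) • x₂) ∈ C)
    (v : Fin q → ℝ) (hv : v ∉ interior (Γ '' X + C))
    (xv : Fin n → ℝ) (zv : Fin q → ℝ)
    (hxv : xv ∈ X) (hfeas : v + zv - Γ xv ∈ C)
    (hzopt : N zv = distFn N v (Γ '' X + C)) :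
    ({Γ xv} - interior C) ∩ (Γ '' X) = ∅ ∧
    v + zv ∈ Γ '' X + C ∧
    ({v + zv} - interior C) ∩ (Γ '' X + C) = ∅ := by
  obtain ⟨hN0, hNsmul, hNadd⟩ := hN
  have hNneg : ∀ z, 0 ≤ N z := by
    intro z
    have h0 : N (0 : Fin q → ℝ) = 0 := (hN0 0).2 rfl
    have hneg : N (-z) = N z := by
      have := hNsmul (-1) z; simpa using this
    have h1 : N (z + (-z)) ≤ N z + N (-z) := hNadd z (-z)
    simp only [add_neg_cancel, h0, hneg] at h1
    linarith
  have hCadd : ∀ a ∈ C, ∀ b ∈ C, a + b ∈ C := by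
    intro a ha b hb
    have hmid : (1/2 : ℝ) • a + (1/2 : ℝ) • b ∈ C :=
      hCconv ha hb (by norm_num) (by norm_num) (by norm_num)
    have := hCcone 2 (by norm_num) _ hmid
    have heq : (2 : ℝ) • ((1/2 : ℝ) • a + (1/2 : ℝ) • b) = a + b := by
      rw [smul_add, smul_smul, smul_smul]; norm_num
    rwa [heq] at this
  have hbdd : BddBelow ((fun y => N (v - y)) '' (Γ '' X + C)) := by
    refine ⟨0, ?_⟩
    rintro r ⟨y, hy, rfl⟩
    exact hNneg _
  have hdist_le : ∀ y ∈ Γ '' X + C, distFn N v (Γ '' X + C) ≤ N (v - y) :=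
    fun y hy => csInf_le hbdd ⟨y, hy, rfl⟩
  -- third conjunct first
  have h3 : ({v + zv} - interior C) ∩ (Γ '' X + C) = ∅ := by
    rw [Set.eq_empty_iff_forall_notMem]
    rintro w ⟨hw1, hw2⟩
    rw [Set.mem_sub] at hw1
    obtain ⟨a, ha, d, hd, hweq⟩ := hw1
    rw [Set.mem_singleton_iff] at ha; subst ha
    rw [Set.mem_add] at hw2
    obtain ⟨γ, hγ, c, hc, hw2⟩ := hw2
    obtain ⟨x', hx', rfl⟩ := hγ
    by_cases hz0 : zv = 0
    · subst hz0
      apply hv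
      rw [mem_interior]
      refine ⟨{w} + interior C, ?_, ?_, ?_⟩
      · rintro u ⟨b, hb, d', hd', rfl⟩
        rw [Set.mem_singleton_iff] at hb; subst hb
        refine Set.mem_add.2 ⟨Γ x', Set.mem_image_of_mem _ hx', c + d',
          hCadd c hc d' (interior_subset hd'), ?_⟩
        rw [← hw2]; abel
      · exact isOpen_interior.add_left
      · refine Set.mem_add.2 ⟨w, rfl, d, hd, ?_⟩
        rw [← hweq]; abel
    · have hzpos : 0 < N zv :=
        lt_of_le_of_ne (hNneg zv) (fun h => hz0 ((hN0 zv).1 h.symm))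
      -- find s ∈ Ioo 0 1 with d - s • zv ∈ C
      have hcont : Continuous fun t : ℝ => d - t • zv := continuous_const.sub (continuous_id.smul continuous_const)
      have hd0 : (fun t : ℝ => d - t • zv) 0 = d := by simp
      have hpre : (fun t : ℝ => d - t • zv) ⁻¹' interior C ∈ nhds (0 : ℝ) :=
        hcont.continuousAt.preimage_mem_nhds (isOpen_interior.mem_nhds (by simpa using hd))
      have hmem : ((fun t : ℝ => d - t • zv) ⁻¹' interior C) ∩ Ioo 0 1 ∈
          nhdsWithin (0 : ℝ) (Ioi 0) :=
        Filter.inter_mem (nhdsWithin_le_nhds hpre)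
          (Ioo_mem_nhdsGT_of_mem (by norm_num : (0:ℝ) ∈ Ico (0:ℝ) 1))
      obtain ⟨s, hsC, hs0, hs1⟩ := Filter.nonempty_of_mem hmem
      have hsC' : d - s • zv ∈ C := interior_subset hsC
      set y' := Γ x' + (c + (d - s • zv)) with hy'
      have hy'P : y' ∈ Γ '' X + C :=
        Set.mem_add.2 ⟨Γ x', Set.mem_image_of_mem _ hx', c + (d - s • zv),
          hCadd c hc _ hsC', rfl⟩
      have hwv : Γ x' + c = v + zv - d := by rw [hw2, hweq]
      have hvy : v - y' = (-(1 - s)) • zv := by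
        rw [hy', ← add_assoc, hwv, neg_smul, sub_smul, one_smul]; abel
      have hNvy : N (v - y') = (1 - s) * N zv := by
        rw [hvy, hNsmul, abs_neg, abs_of_nonneg (by linarith)]
      have := hdist_le y' hy'P
      rw [← hzopt, hNvy] at this
      nlinarith
  have h2 : v + zv ∈ Γ '' X + C :=
    Set.mem_add.2 ⟨Γ xv, Set.mem_image_of_mem _ hxv, v + zv - Γ xv, hfeas, by abel⟩
  refine ⟨?_, h2, h3⟩
  rw [Set.eq_empty_iff_forall_notMem]
  rintro w ⟨hw1, hw2⟩
  rw [Set.mem_sub] at hw1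
  obtain ⟨a, ha, d, hd, hweq⟩ := hw1
  rw [Set.mem_singleton_iff] at ha; subst ha
  have : (v + zv) - d ∈ ({v + zv} - interior C) ∩ (Γ '' X + C) := by
    constructor
    · exact Set.sub_mem_sub rfl hd
    · refine Set.mem_add.2 ⟨w, hw2, v + zv - Γ xv, hfeas, ?_⟩
      rw [← hweq]; abel
  rw [h3] at this
  exact this
end
end

section
/- Let K ⊆ ℝ^q be a nonempty compact set and C ⊆ ℝ^q a closed convex cone. Then the recession cone of K + C equals C: recc(K + C) = C, where recc A := {k ∈ ℝ^q : a + λk ∈ A for all a ∈ A and all λ ≥ 0}. -/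
open Set Pointwise

noncomputable section

/-- Recession cone of a set. -/
def recC {q : ℕ} (A : Set (Fin q → ℝ)) : Set (Fin q → ℝ) :=
  {k | ∀ a ∈ A, ∀ t : ℝ, 0 ≤ t → a + t • k ∈ A}

open Filter Topology

theorem Convex.add_mem_of_smul_mem {E : Type*} [AddCommGroup E] [Module ℝ E] {C : Set E}
    (hconv : Convex ℝ C) (hcone : ∀ t : ℝ, 0 ≤ t → ∀ y ∈ C, t • y ∈ C)
    {x y : E} (hx : x ∈ C) (hy : y ∈ C) : x + y ∈ C := by
  have hmid : (1 / 2 : ℝ) • x + (1 / 2 : ℝ) • y ∈ C := hconv hx hy (by norm_num) (by norm_num)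
    (by norm_num)
  have hdouble : (2 : ℝ) • ((1 / 2 : ℝ) • x + (1 / 2 : ℝ) • y) = x + y := by
    rw [smul_add, smul_smul, smul_smul]; norm_num
  simpa only [hdouble] using hcone 2 zero_le_two _ hmid

/-- If `x + n • k = yₙ + cₙ` with `yₙ ∈ K` bounded, then `n⁻¹ • cₙ = k + n⁻¹ • (x - yₙ) → k`. -/
theorem mem_of_forall_add_smul_mem_add {E : Type*} [NormedAddCommGroup E] [NormedSpace ℝ E]
    {K C : Set E} (hK : Bornology.IsBounded K) (hC : IsClosed C)
    (hcone : ∀ t : ℝ, 0 ≤ t → ∀ y ∈ C, t • y ∈ C) {x k : E}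
    (h : ∀ t : ℝ, 0 ≤ t → x + t • k ∈ K + C) : k ∈ C := by
  choose y hy c hc hyc using fun n : ℕ => h n n.cast_nonneg
  obtain ⟨R, hR⟩ := hK.exists_norm_le
  have hbounded : IsBoundedUnder (· ≤ ·) atTop (norm ∘ fun n => x - y n) :=
    isBoundedUnder_of ⟨‖x‖ + R, fun n => (norm_sub_le _ _).trans (by gcongr; exact hR _ (hy n))⟩
  have hlim : Tendsto (fun n : ℕ => k + (n : ℝ)⁻¹ • (x - y n)) atTop (𝓝 k) := by
    simpa using tendsto_const_nhds.add
      (tendsto_inv_atTop_nhds_zero_nat.zero_smul_isBoundedUnder_le hbounded)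
  have hscaled : ∀ n : ℕ, n ≠ 0 → (n : ℝ)⁻¹ • c n = k + (n : ℝ)⁻¹ • (x - y n) := by
    intro n hn
    have hc_eq : c n = (x - y n) + (n : ℝ) • k := by
      rw [← add_sub_cancel_left (y n) (c n), show y n + c n = x + (n : ℝ) • k from hyc n]; abel
    rw [hc_eq, smul_add, smul_smul, inv_mul_cancel₀ (Nat.cast_ne_zero.2 hn), one_smul, add_comm]
  refine hC.mem_of_tendsto (hlim.congr' ?_)
    (Eventually.of_forall fun n => hcone _ (inv_nonneg.2 n.cast_nonneg) _ (hc n))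
  filter_upwards [eventually_ne_atTop 0] with n hn using (hscaled n hn).symm

theorem recC_add_subset {q : ℕ} {K C : Set (Fin q → ℝ)} (hK : Bornology.IsBounded K)
    (hKne : K.Nonempty) (hC : IsClosed C) (hcone : ∀ t : ℝ, 0 ≤ t → ∀ y ∈ C, t • y ∈ C)
    (hC0 : (0 : Fin q → ℝ) ∈ C) : recC (K + C) ⊆ C := by
  intro k hk
  obtain ⟨x, hx⟩ := hKne
  exact mem_of_forall_add_smul_mem_add hK hC hcone
    (hk x (by simpa using add_mem_add hx hC0))

theorem subset_recC_add {q : ℕ} (K : Set (Fin q → ℝ)) {C : Set (Fin q → ℝ)}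
    (hconv : Convex ℝ C) (hcone : ∀ t : ℝ, 0 ≤ t → ∀ y ∈ C, t • y ∈ C) : C ⊆ recC (K + C) := by
  rintro k hk _ ⟨y, hy, c, hc, rfl⟩ t ht
  rw [add_assoc]
  exact add_mem_add hy (hconv.add_mem_of_smul_mem hcone hc (hcone t ht k hk))

/-- for a nonempty compact set `K` and a closed convex cone `C`,
`recc (K + C) = C`. -/
theorem stmt9 {q : ℕ} (K C : Set (Fin q → ℝ))
    (hK : IsCompact K) (hKne : K.Nonempty)
    (hCclosed : IsClosed C) (hCconv : Convex ℝ C)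
    (hCcone : ∀ t : ℝ, 0 ≤ t → ∀ y ∈ C, t • y ∈ C)
    (hC0 : (0 : Fin q → ℝ) ∈ C) :
    recC (K + C) = C :=
  (recC_add_subset hK.isBounded hKne hCclosed hCcone hC0).antisymm (subset_recC_add K hCconv hCcone)
end
end

section
/- Let ε > 0. Let Q = ⋂_{i=1}^r {y ∈ ℝ^q : (u^i)ᵀy ≥ a_i} be a nonempty polyhedron with recc Q = C whose set V of vertices (extreme points) is nonempty and finite, and suppose P ⊆ Q. Suppose that for every vertex v ∈ V there exist x^v ∈ X and z^v ∈ ℝ^q with ‖z^v‖ ≤ ε and Γ(x^v) ≤_C v + z^v. Then P ⊆ conv{Γ(x^v) : v ∈ V} + C + B_ε, where B_ε = {z ∈ ℝ^q : ‖z‖ ≤ ε}; i.e., the finite set {x^v : v ∈ V} is a finite ε-infimizer of (P). -/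
open Set Pointwise

noncomputable section

/-! The lineality space `{d | ∀ i, (uⁱ)ᵀd = 0}` of `Q` lies in `recc Q ∩ -recc Q = C ∩ -C = {0}`,
so `Q` is line-free and decomposes as `Q = conv V + {d | ∀ i, (uⁱ)ᵀd ≥ 0} ⊆ conv V + C`. The
decomposition goes by downward induction on the set of active constraints: a non-vertex `y` admits
a direction `d ≠ 0` in its active face; moving along `±d` until a new constraint becomes active
either writes `y` as a convex combination of two points with more active constraints, or as such a
point plus a recession direction. Each vertex `v = Γ(xᵛ) + (v + zᵛ - Γ(xᵛ)) - zᵛ` lies in the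
convex set `conv {Γ(xᵛ) : v ∈ V} + C + B_ε`, hence so does `conv V`, and `C + C ⊆ C` absorbs the
remaining cone. -/

section Polyhedron

variable {𝕜 E ι : Type*} [Field 𝕜] [LinearOrder 𝕜] [AddCommGroup E] [Module 𝕜 E]
  (ℓ : ι → E →ₗ[𝕜] 𝕜) (a : ι → 𝕜)

def polyhedron : Set E := ⋂ i, {y | a i ≤ ℓ i y}

def activeConstraints (y : E) : Set ι := {i | ℓ i y = a i}

variable {ℓ a}

lemma mem_polyhedron {y : E} : y ∈ polyhedron ℓ a ↔ ∀ i, a i ≤ ℓ i y := by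
  simp [polyhedron]

variable [IsStrictOrderedRing 𝕜]

lemma convex_polyhedron : Convex 𝕜 (polyhedron ℓ a) :=
  convex_iInter fun i => convex_halfSpace_ge (ℓ i).isLinear (a i)

lemma add_mem_polyhedron {y d : E} (hy : y ∈ polyhedron ℓ a) (hd : d ∈ polyhedron ℓ 0) :
    y + d ∈ polyhedron ℓ a := by
  rw [mem_polyhedron] at *
  intro i
  simpa using add_le_add (hy i) (hd i)

lemma smul_mem_polyhedron_zero {d : E} {t : 𝕜} (ht : 0 ≤ t) (hd : d ∈ polyhedron ℓ 0) :
    t • d ∈ polyhedron ℓ 0 := by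
  rw [mem_polyhedron] at *
  intro i
  simpa using mul_nonneg ht (hd i)

lemma LinearMap.eq_of_mem_openSegment_of_le {f : E →ₗ[𝕜] 𝕜} {x₁ x₂ y : E}
    (hy : y ∈ openSegment 𝕜 x₁ x₂) (h₁ : f y ≤ f x₁) (h₂ : f y ≤ f x₂) : f x₁ = f y := by
  obtain ⟨s, b, hs, hb, hsb, rfl⟩ := hy
  obtain rfl : b = 1 - s := by linarith
  simp only [map_add, map_smul, smul_eq_mul] at h₁ h₂ ⊢
  have heq : f x₁ = f x₂ := le_antisymm (by nlinarith) (by nlinarith)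
  rw [← heq]
  ring

lemma exists_ne_zero_of_notMem_extremePoints {y : E} (hy : y ∈ polyhedron ℓ a)
    (hext : y ∉ (polyhedron ℓ a).extremePoints 𝕜) :
    ∃ d ≠ 0, ∀ i ∈ activeConstraints ℓ a y, ℓ i d = 0 := by
  simp only [mem_extremePoints_iff_left, hy, true_and, not_forall] at hext
  obtain ⟨x₁, hx₁, x₂, hx₂, hseg, hne⟩ := hext
  refine ⟨x₁ - y, sub_ne_zero.2 hne, fun i hi => ?_⟩
  rw [mem_polyhedron] at hx₁ hx₂
  have hi : ℓ i y = a i := hi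
  rw [map_sub, sub_eq_zero]
  exact (ℓ i).eq_of_mem_openSegment_of_le hseg (hi ▸ hx₁ i) (hi ▸ hx₂ i)

lemma add_mem_add_polyhedron_zero {S : Set E} {y d : E} (hy : y ∈ S + polyhedron ℓ 0)
    (hd : d ∈ polyhedron ℓ 0) : y + d ∈ S + polyhedron ℓ 0 := by
  obtain ⟨c, hc, k, hk, rfl⟩ := hy
  rw [add_assoc]
  exact Set.add_mem_add hc (add_mem_polyhedron hk hd)

variable [Finite ι]

lemma exists_add_smul_mem_polyhedron_activeConstraints_ssubset {y d : E} {j : ι}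
    (hy : y ∈ polyhedron ℓ a) (hd : ∀ i ∈ activeConstraints ℓ a y, ℓ i d = 0)
    (hj : ℓ j d < 0) :
    ∃ t : 𝕜, 0 < t ∧ y + t • d ∈ polyhedron ℓ a ∧
      activeConstraints ℓ a y ⊂ activeConstraints ℓ a (y + t • d) := by
  -- ratio test: `k` is the first constraint hit when moving from `y` along `d`
  obtain ⟨k, hk, hmin⟩ := Set.exists_min_image {i | ℓ i d < 0}
    (fun i => (ℓ i y - a i) / -ℓ i d) (Set.toFinite _) ⟨j, hj⟩
  have hk : ℓ k d < 0 := hk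
  have hyk : a k < ℓ k y :=
    lt_of_le_of_ne (mem_polyhedron.1 hy k) fun h => hk.ne (hd k h.symm)
  set t := (ℓ k y - a k) / -ℓ k d
  have ht : 0 < t := div_pos (sub_pos.2 hyk) (neg_pos.2 hk)
  have hkt : ℓ k (y + t • d) = a k := by
    have := hk.ne
    simp only [t, map_add, map_smul, smul_eq_mul]
    field_simp
    ring
  refine ⟨t, ht, mem_polyhedron.2 fun i => ?_, fun i hi => ?_, fun hsub => ?_⟩
  · simp only [map_add, map_smul, smul_eq_mul]
    rcases lt_or_ge (ℓ i d) 0 with hi | hi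
    · have := (le_div_iff₀ (neg_pos.2 hi)).1 (hmin i hi)
      linarith
    · nlinarith [mem_polyhedron.1 hy i]
  · have hi' : ℓ i y = a i := hi
    show ℓ i (y + t • d) = a i
    simp [hd i hi, hi']
  · exact hk.ne (hd k (hsub hkt))

lemma mem_add_polyhedron_zero_of_forall_ssubset {S : Set E} (hS : Convex 𝕜 S) {y d : E} {j : ι}
    (hy : y ∈ polyhedron ℓ a)
    (ih : ∀ y' ∈ polyhedron ℓ a, activeConstraints ℓ a y ⊂ activeConstraints ℓ a y' →
      y' ∈ S + polyhedron ℓ 0)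
    (hd : ∀ i ∈ activeConstraints ℓ a y, ℓ i d = 0) (hj : ℓ j d < 0) :
    y ∈ S + polyhedron ℓ 0 := by
  obtain ⟨t₁, ht₁, hy₁, hss₁⟩ :=
    exists_add_smul_mem_polyhedron_activeConstraints_ssubset hy hd hj
  have hmem₁ := ih _ hy₁ hss₁
  -- Blocked both ways, `y` lies between two points with more active constraints;
  -- otherwise `-d` is a recession direction.
  by_cases hblocked : ∃ k, 0 < ℓ k d
  · obtain ⟨k, hk⟩ := hblocked
    obtain ⟨t₂, ht₂, hy₂, hss₂⟩ :=
      exists_add_smul_mem_polyhedron_activeConstraints_ssubset (d := -d) hy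
        (fun i hi => by rw [map_neg, hd i hi, neg_zero]) (by rwa [map_neg, neg_lt_zero])
    have hmem₂ := ih _ hy₂ hss₂
    have hsum := add_pos ht₁ ht₂
    have hcomb := (hS.add convex_polyhedron) hmem₁ hmem₂ (div_nonneg ht₂.le hsum.le)
      (div_nonneg ht₁.le hsum.le) (by field_simp; ring)
    convert hcomb using 1
    match_scalars <;> field_simp <;> ring
  · simp only [not_exists, not_lt] at hblocked
    have hdrec : -d ∈ polyhedron ℓ 0 := mem_polyhedron.2 fun i => by simpa using hblocked i
    simpa using add_mem_add_polyhedron_zero hmem₁ (smul_mem_polyhedron_zero ht₁.le hdrec)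

theorem polyhedron_subset_convexHull_extremePoints_add
    (hline : ∀ d, (∀ i, ℓ i d = 0) → d = 0) :
    polyhedron ℓ a ⊆ convexHull 𝕜 ((polyhedron ℓ a).extremePoints 𝕜) + polyhedron ℓ 0 := by
  intro y hy
  induction y using (InvImage.wf (activeConstraints ℓ a) wellFounded_gt).induction with
  | _ y ih =>
  by_cases hext : y ∈ (polyhedron ℓ a).extremePoints 𝕜
  · exact ⟨y, subset_convexHull 𝕜 _ hext, 0, mem_polyhedron.2 fun i => by simp, add_zero y⟩
  obtain ⟨d, hd0, hd⟩ := exists_ne_zero_of_notMem_extremePoints hy hext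
  obtain ⟨j, hj⟩ : ∃ j, ℓ j d ≠ 0 := by
    by_contra! h
    exact hd0 (hline d h)
  have ih' := fun y' hy' hss => ih y' hss hy'
  rcases hj.lt_or_gt with hj | hj
  · exact mem_add_polyhedron_zero_of_forall_ssubset (convex_convexHull 𝕜 _) hy ih' hd hj
  · exact mem_add_polyhedron_zero_of_forall_ssubset (convex_convexHull 𝕜 _) hy ih' (d := -d)
      (fun i hi => by simp [hd i hi]) (by simpa using hj)

end Polyhedron

lemma polyhedron_zero_subset_recC {q : ℕ} {ι : Type*} {ℓ : ι → (Fin q → ℝ) →ₗ[ℝ] ℝ}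
    {a : ι → ℝ} : polyhedron ℓ 0 ⊆ recC (polyhedron ℓ a) :=
  fun _ hd _ hy _ ht => add_mem_polyhedron hy (smul_mem_polyhedron_zero ht hd)

lemma Convex.add_self_subset {E : Type*} [AddCommGroup E] [Module ℝ E] {C : Set E}
    (hC : Convex ℝ C) (hcone : ∀ t : ℝ, 0 ≤ t → ∀ y ∈ C, t • y ∈ C) : C + C ⊆ C :=
  calc C + C = (1 + 1 : ℝ) • C := by rw [hC.add_smul zero_le_one zero_le_one, one_smul]
    _ ⊆ C := Set.smul_set_subset_iff.2 fun y hy => hcone _ (by norm_num) y hy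

def IsNormFn.toSeminorm {q : ℕ} {N : (Fin q → ℝ) → ℝ} (hN : IsNormFn N) :
    Seminorm ℝ (Fin q → ℝ) :=
  Seminorm.of N hN.2.2 fun t z => by rw [hN.2.1, Real.norm_eq_abs]

lemma IsNormFn.setOf_le_eq_closedBall {q : ℕ} {N : (Fin q → ℝ) → ℝ} (hN : IsNormFn N) (ε : ℝ) :
    {z | N z ≤ ε} = hN.toSeminorm.closedBall 0 ε := by
  ext z
  rw [Seminorm.mem_closedBall_zero]
  rfl

theorem stmt13_general {q n r : ℕ}
    (N : (Fin q → ℝ) → ℝ) (hN : IsNormFn N)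
    (C : Set (Fin q → ℝ))
    (hCconv : Convex ℝ C)
    (hCcone : ∀ t : ℝ, 0 ≤ t → ∀ y ∈ C, t • y ∈ C)
    (hCpointed : ∀ y ∈ C, -y ∈ C → y = 0)
    (X : Set (Fin n → ℝ))
    (Γ : (Fin n → ℝ) → (Fin q → ℝ))
    (ε : ℝ)
    (u : Fin r → (Fin q → ℝ)) (a : Fin r → ℝ)
    (Q : Set (Fin q → ℝ)) (hQ : Q = ⋂ i, {y | a i ≤ dotp (u i) y})
    (hQrec : recC Q = C)
    (V : Set (Fin q → ℝ)) (hV : V = Set.extremePoints ℝ Q)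
    (hPQ : Γ '' X + C ⊆ Q)
    (xv : (Fin q → ℝ) → (Fin n → ℝ)) (zv : (Fin q → ℝ) → (Fin q → ℝ))
    (hvert : ∀ v ∈ V, xv v ∈ X ∧ N (zv v) ≤ ε ∧ v + zv v - Γ (xv v) ∈ C) :
    Γ '' X + C ⊆ convexHull ℝ ((fun v => Γ (xv v)) '' V) + C + {z | N z ≤ ε} := by
  set ℓ : Fin r → (Fin q → ℝ) →ₗ[ℝ] ℝ := fun i => dotProductBilin ℝ ℝ (u i)
  -- `dotp w` is definitionally `dotProductBilin ℝ ℝ w`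
  obtain rfl : Q = polyhedron ℓ a := hQ
  have hKC : polyhedron ℓ 0 ⊆ C := hQrec ▸ polyhedron_zero_subset_recC
  have hline (d) (hd : ∀ i, ℓ i d = 0) : d = 0 :=
    hCpointed d (hKC (mem_polyhedron.2 fun i => (hd i).ge))
      (hKC (mem_polyhedron.2 fun i => by simp [hd i]))
  set A := convexHull ℝ ((fun v => Γ (xv v)) '' V)
  rw [hN.setOf_le_eq_closedBall]
  have hVA : convexHull ℝ V ⊆ A + C + hN.toSeminorm.closedBall 0 ε := by
    refine convexHull_min (fun v hv => ?_)
      (((convex_convexHull ℝ _).add hCconv).add (Seminorm.convex_closedBall _ _ _))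
    obtain ⟨-, hz, hc⟩ := hvert v hv
    refine ⟨_, Set.add_mem_add (subset_convexHull ℝ _ ⟨v, hv, rfl⟩) hc, -zv v, ?_, ?_⟩
    · rw [Seminorm.mem_closedBall_zero, map_neg_eq_map]
      exact hz
    · simp only [add_sub_cancel, add_neg_cancel_right]
  calc Γ '' X + C ⊆ polyhedron ℓ a := hPQ
    _ ⊆ convexHull ℝ V + polyhedron ℓ 0 :=
      hV ▸ polyhedron_subset_convexHull_extremePoints_add hline
    _ ⊆ A + C + hN.toSeminorm.closedBall 0 ε + C := Set.add_subset_add hVA hKC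
    _ = A + (C + C) + hN.toSeminorm.closedBall 0 ε := by ac_rfl
    _ ⊆ A + C + hN.toSeminorm.closedBall 0 ε := by gcongr; exact hCconv.add_self_subset hCcone

/-- if `Q ⊇ P` is a polyhedron with `recc Q = C` and every vertex `v`
of `Q` admits `x^v ∈ X`, `z^v` with `‖z^v‖ ≤ ε` and `Γ(x^v) ≤_C v + z^v`, then
`P ⊆ conv {Γ(x^v) : v ∈ V} + C + B_ε`. -/
theorem stmt13 {q n r : ℕ}
    (N : (Fin q → ℝ) → ℝ) (hN : IsNormFn N)
    (C : Set (Fin q → ℝ))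
    (hCclosed : IsClosed C) (hCconv : Convex ℝ C)
    (hCcone : ∀ t : ℝ, 0 ≤ t → ∀ y ∈ C, t • y ∈ C)
    (hCsolid : (interior C).Nonempty)
    (hCpointed : ∀ y ∈ C, -y ∈ C → y = 0)
    (hCnontriv : {(0 : Fin q → ℝ)} ⊂ C ∧ C ⊂ Set.univ)
    (X : Set (Fin n → ℝ)) (hX : IsCompact X) (hXconv : Convex ℝ X)
    (hXint : (interior X).Nonempty)
    (Γ : (Fin n → ℝ) → (Fin q → ℝ)) (hΓ : ContinuousOn Γ X)
    (hΓconv : ∀ x₁ ∈ X, ∀ x₂ ∈ X, ∀ t : ℝ, t ∈ Icc (0:ℝ) 1 →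
      t • Γ x₁ + (1 - t) • Γ x₂ - Γ (t • x₁ + (1 - t) • x₂) ∈ C)
    (ε : ℝ) (hε : 0 < ε)
    (u : Fin r → (Fin q → ℝ)) (hu : ∀ i, u i ≠ 0) (a : Fin r → ℝ)
    (Q : Set (Fin q → ℝ)) (hQ : Q = ⋂ i, {y | a i ≤ dotp (u i) y})
    (hQne : Q.Nonempty) (hQrec : recC Q = C)
    (V : Set (Fin q → ℝ)) (hV : V = Set.extremePoints ℝ Q)
    (hVne : V.Nonempty) (hVfin : V.Finite)
    (hPQ : Γ '' X + C ⊆ Q)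
    (xv : (Fin q → ℝ) → (Fin n → ℝ)) (zv : (Fin q → ℝ) → (Fin q → ℝ))
    (hvert : ∀ v ∈ V, xv v ∈ X ∧ N (zv v) ≤ ε ∧ v + zv v - Γ (xv v) ∈ C) :
    Γ '' X + C ⊆ convexHull ℝ ((fun v => Γ (xv v)) '' V) + C + {z | N z ≤ ε} :=
  stmt13_general N hN C hCconv hCcone hCpointed X Γ ε u a Q hQ hQrec V hV hPQ xv zv hvert
end
end

section
/- Let w¹, …, w^J ∈ ℝ^q be vectors that span ℝ^q with Σ_{j=1}^J w^j ≠ 0 (this holds in particular when C⁺ = conv cone{w¹,…,w^J} is solid). Then for every a ∈ ℝ^J and c ∈ ℝ, the set (⋂_{j=1}^J {y ∈ ℝ^q : (w^j)ᵀy ≥ a_j}) ∩ {y ∈ ℝ^q : (Σ_{j=1}^J w^j)ᵀ y ≤ c} is compact. -/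
open Set Pointwise Topology

noncomputable section

lemma dotp_cont {q : ℕ} (v : Fin q → ℝ) : Continuous fun y : Fin q → ℝ => dotp v y := by
  unfold dotp
  exact continuous_finset_sum _ fun i _ => continuous_const.mul (continuous_apply i)

/-- The linear map `y ↦ (dotp (w j) y)_j`. -/
def dotL {q J : ℕ} (w : Fin J → (Fin q → ℝ)) : (Fin q → ℝ) →ₗ[ℝ] (Fin J → ℝ) :=
  LinearMap.pi fun j =>
    { toFun := fun y => dotp (w j) y
      map_add' := by
        intro x y
        simp [dotp, mul_add, Finset.sum_add_distrib]
      map_smul' := by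
        intro c x
        simp [dotp, Finset.mul_sum, mul_comm, mul_assoc, mul_left_comm] }

/-- if `w¹, …, w^J` span `ℝ^q` and their sum is nonzero, then the
intersection of the halfspaces `{y : (w^j)ᵀy ≥ a_j}` with `{y : (Σ_j w^j)ᵀy ≤ c}`
is compact. -/
theorem stmt15 {q J : ℕ}
    (w : Fin J → (Fin q → ℝ))
    (hspan : Submodule.span ℝ (Set.range w) = ⊤)
    (hsum : (∑ j, w j) ≠ 0)
    (a : Fin J → ℝ) (c : ℝ) :
    IsCompact ((⋂ j, {y : Fin q → ℝ | a j ≤ dotp (w j) y})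
      ∩ {y : Fin q → ℝ | dotp (∑ j, w j) y ≤ c}) := by
  set T := dotL w with hT
  -- injectivity
  have hinj : LinearMap.ker T = ⊥ := by
    rw [LinearMap.ker_eq_bot']
    intro y hy
    have hdz : ∀ j, dotp (w j) y = 0 := fun j => congrFun hy j
    -- the functional z ↦ dotp z y vanishes on span of range w = ⊤
    let f : (Fin q → ℝ) →ₗ[ℝ] ℝ :=
      { toFun := fun z => dotp z y
        map_add' := by intro x z; simp [dotp, add_mul, Finset.sum_add_distrib]
        map_smul' := by intro c x; simp [dotp, Finset.mul_sum, mul_assoc] }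
    have hf : ∀ z, f z = 0 := by
      intro z
      have hz : z ∈ Submodule.span ℝ (Set.range w) := by rw [hspan]; trivial
      refine Submodule.span_induction ?_ ?_ ?_ ?_ hz
      · rintro _ ⟨j, rfl⟩; exact hdz j
      · simp
      · intro u v _ _ hu hv; simp [hu, hv]
      · intro c u _ hu; simp [hu]
    have hyy : dotp y y = 0 := hf y
    have : ∀ i, y i = 0 := by
      intro i
      have hnn : ∀ i ∈ Finset.univ, (0:ℝ) ≤ y i * y i := fun i _ => mul_self_nonneg _
      have := (Finset.sum_eq_zero_iff_of_nonneg hnn).mp hyy i (Finset.mem_univ i)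
      exact mul_self_eq_zero.mp this
    funext i; exact this i
  have hemb : IsClosedEmbedding T := LinearMap.isClosedEmbedding_of_injective hinj
  -- the compact box
  set K : Set (Fin J → ℝ) :=
    Set.pi Set.univ (fun j => Set.Icc (a j) (c - ∑ k ∈ Finset.univ.erase j, a k)) with hK
  have hKc : IsCompact K := isCompact_univ_pi fun j => isCompact_Icc
  have hpre : IsCompact (T ⁻¹' K) := hemb.isCompact_preimage hKc
  -- the set is closed
  have hclosed : IsClosed ((⋂ j, {y : Fin q → ℝ | a j ≤ dotp (w j) y})
      ∩ {y : Fin q → ℝ | dotp (∑ j, w j) y ≤ c}) := by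
    refine IsClosed.inter (isClosed_iInter fun j => ?_) ?_
    · exact isClosed_le continuous_const (dotp_cont _)
    · exact isClosed_le (dotp_cont _) continuous_const
  -- the set is contained in T ⁻¹' K
  refine hpre.of_isClosed_subset hclosed ?_
  rintro y ⟨hy1, hy2⟩
  have hlo : ∀ j, a j ≤ dotp (w j) y := by
    intro j
    exact Set.mem_iInter.mp hy1 j
  have hsumdot : dotp (∑ j, w j) y = ∑ j, dotp (w j) y := by
    simp [dotp, Finset.sum_apply, Finset.sum_mul]
    rw [Finset.sum_comm]
  have hc : ∑ j, dotp (w j) y ≤ c := by rw [← hsumdot]; exact hy2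
  intro j _
  constructor
  · exact hlo j
  · have hsplit : ∑ k, dotp (w k) y
        = dotp (w j) y + ∑ k ∈ Finset.univ.erase j, dotp (w k) y :=
      (Finset.add_sum_erase _ _ (Finset.mem_univ j)).symm
    have hge : ∑ k ∈ Finset.univ.erase j, a k ≤ ∑ k ∈ Finset.univ.erase j, dotp (w k) y :=
      Finset.sum_le_sum fun k _ => hlo k
    have : dotp (w j) y + ∑ k ∈ Finset.univ.erase j, a k ≤ c := by
      calc dotp (w j) y + ∑ k ∈ Finset.univ.erase j, a k
          ≤ dotp (w j) y + ∑ k ∈ Finset.univ.erase j, dotp (w k) y := by linarith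
        _ = ∑ k, dotp (w k) y := hsplit.symm
        _ ≤ c := hc
    have hTy : T y j = dotp (w j) y := rfl
    rw [hTy]
    linarith
end
end

section
/- Let C ⊆ ℝ^q be a closed convex cone with nonempty interior, let ε > 0 and let K ⊆ ℝ^q be a compact set. Then every set T ⊆ ℝ^q such that the sets B_v := ({v} + C) ∩ {y ∈ ℝ^q : ‖y − v‖ ≤ ε/2} (v ∈ T) are pairwise disjoint and all contained in K is finite. In particular, there is no injective sequence (v^k)_{k∈ℕ} in ℝ^q with the sets B_{v^k} pairwise disjoint and contained in K. -/
open Set Pointwise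

noncomputable section

/-! Each cap `B v` contains the translate `v + S` of the fixed open set
`S = int C ∩ {y | N y < ε/2}`, which is nonempty because an interior point of the cone `C` can be
shrunk towards `0`; so `S` has positive Lebesgue measure. By translation invariance, only finitely
many pairwise disjoint translates of `S` fit into the compact set `K`, which has finite measure. -/

open MeasureTheory Filter Topology

theorem convexOn_univ_of_subadditive_of_smul {E : Type*} [AddCommGroup E] [Module ℝ E]
    {N : E → ℝ} (hsmul : ∀ (a : ℝ) z, N (a • z) = |a| * N z)
    (hadd : ∀ z w, N (z + w) ≤ N z + N w) : ConvexOn ℝ univ N := by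
  refine ⟨convex_univ, fun x _ y _ a b ha hb _ => ?_⟩
  calc N (a • x + b • y) ≤ N (a • x) + N (b • y) := hadd _ _
    _ = a • N x + b • N y := by rw [hsmul, hsmul, abs_of_nonneg ha, abs_of_nonneg hb]; rfl

theorem IsNormFn.continuous_s18 {q : ℕ} {N : (Fin q → ℝ) → ℝ} (hN : IsNormFn N) : Continuous N := by
  rw [← continuousOn_univ, ← interior_univ]
  exact (convexOn_univ_of_subadditive_of_smul hN.2.1 hN.2.2).continuousOn_interior

theorem nonempty_interior_inter_of_mem_nhds_zero {E : Type*} [AddCommGroup E] [Module ℝ E]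
    [TopologicalSpace E] [ContinuousSMul ℝ E] {C U : Set E}
    (hC : ∀ t : ℝ, 0 ≤ t → ∀ y ∈ C, t • y ∈ C) (hCint : (interior C).Nonempty) (hU : U ∈ 𝓝 0) :
    (interior C ∩ U).Nonempty := by
  obtain ⟨x, hx⟩ := hCint
  have hcont : Continuous fun t : ℝ => t • x := continuous_id.smul continuous_const
  have hlim : Tendsto (fun t : ℝ => t • x) (𝓝[>] 0) (𝓝 0) :=
    tendsto_nhdsWithin_of_tendsto_nhds (hcont.tendsto' 0 0 (zero_smul ℝ x))
  obtain ⟨t, ht, htU⟩ := (eventually_mem_nhdsWithin.and (hlim hU)).exists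
  have hscale : t • C ⊆ C := by
    rintro _ ⟨y, hy, rfl⟩
    exact hC t ht.le y hy
  have hint : t • x ∈ interior (t • C) := by
    rw [interior_smul₀ ht.ne']
    exact smul_mem_smul_set hx
  exact ⟨t • x, interior_mono hscale hint, htU⟩

theorem finite_of_pairwiseDisjoint_vadd_subset {G : Type*} [AddGroup G] [MeasurableSpace G]
    [MeasurableAdd G] (μ : Measure G) [μ.IsAddLeftInvariant] {S K T : Set G}
    (hS : MeasurableSet S) (hS0 : μ S ≠ 0) (hK : μ K ≠ ⊤)
    (hdisj : T.PairwiseDisjoint (· +ᵥ S)) (hsub : ∀ v ∈ T, v +ᵥ S ⊆ K) : T.Finite := by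
  have := Measure.finite_const_le_meas_of_disjoint_iUnion μ (pos_iff_ne_zero.2 hS0)
    (As := fun v : T => (v : G) +ᵥ S) (fun v => hS.const_vadd _) hdisj.subtype
    (ne_top_of_le_ne_top hK (measure_mono (iUnion_subset fun v => hsub v v.2)))
  simpa only [measure_vadd, le_refl, ofPred_true, finite_univ_iff, finite_coe_iff] using this

theorem stmt18_general {q : ℕ}
    (N : (Fin q → ℝ) → ℝ) (hN : IsNormFn N)
    (C : Set (Fin q → ℝ))
    (hCcone : ∀ t : ℝ, 0 ≤ t → ∀ y ∈ C, t • y ∈ C)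
    (hCsolid : (interior C).Nonempty)
    (ε : ℝ) (hε : 0 < ε)
    (K : Set (Fin q → ℝ)) (hK : IsCompact K)
    (B : (Fin q → ℝ) → Set (Fin q → ℝ))
    (hB : ∀ v, B v = ({v} + C) ∩ {y | N (y - v) ≤ ε / 2}) :
    (∀ T : Set (Fin q → ℝ),
        (∀ v ∈ T, ∀ u ∈ T, v ≠ u → Disjoint (B v) (B u)) →
        (∀ v ∈ T, B v ⊆ K) → T.Finite) ∧
    ¬ ∃ vk : ℕ → (Fin q → ℝ), Function.Injective vk ∧
        (∀ i j : ℕ, i ≠ j → Disjoint (B (vk i)) (B (vk j))) ∧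
        (∀ k, B (vk k) ⊆ K) := by
  have hball : IsOpen {y | N y < ε / 2} := isOpen_lt hN.continuous_s18 continuous_const
  set S := interior C ∩ {y | N y < ε / 2}
  have hSopen : IsOpen S := isOpen_interior.inter hball
  have hSne : S.Nonempty := nonempty_interior_inter_of_mem_nhds_zero hCcone hCsolid
    (hball.mem_nhds (by simpa [(hN.1 0).2 rfl] using hε))
  have hSB : ∀ v, v +ᵥ S ⊆ B v := by
    rintro v _ ⟨s, ⟨hsC, hsN⟩, rfl⟩
    rw [hB]
    exact ⟨add_mem_add rfl (interior_subset hsC), by simpa using hsN.le⟩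
  have hfinite (T : Set (Fin q → ℝ)) (hdisj : T.PairwiseDisjoint B) (hBK : ∀ v ∈ T, B v ⊆ K) :
      T.Finite :=
    finite_of_pairwiseDisjoint_vadd_subset volume hSopen.measurableSet
      (hSopen.measure_ne_zero _ hSne) hK.measure_lt_top.ne (hdisj.mono_on fun v _ => hSB v)
      fun v hv => (hSB v).trans (hBK v hv)
  refine ⟨hfinite, fun ⟨vk, hinj, hdisj, hBK⟩ => ?_⟩
  exact infinite_range_of_injective hinj
    (hfinite _ (Pairwise.range_pairwise fun i j h => hdisj i j h) (forall_mem_range.2 hBK))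

/-- packing argument — any family of pairwise disjoint translated
"cone caps" `B_v = ({v} + C) ∩ {y : ‖y − v‖ ≤ ε/2}` contained in a compact set is
finite; in particular no injective sequence of such pairwise disjoint caps exists. -/
theorem stmt18 {q : ℕ}
    (N : (Fin q → ℝ) → ℝ) (hN : IsNormFn N)
    (C : Set (Fin q → ℝ))
    (hCclosed : IsClosed C) (hCconv : Convex ℝ C)
    (hCcone : ∀ t : ℝ, 0 ≤ t → ∀ y ∈ C, t • y ∈ C)
    (hC0 : (0 : Fin q → ℝ) ∈ C)
    (hCsolid : (interior C).Nonempty)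
    (ε : ℝ) (hε : 0 < ε)
    (K : Set (Fin q → ℝ)) (hK : IsCompact K)
    (B : (Fin q → ℝ) → Set (Fin q → ℝ))
    (hB : ∀ v, B v = ({v} + C) ∩ {y | N (y - v) ≤ ε / 2}) :
    (∀ T : Set (Fin q → ℝ),
        (∀ v ∈ T, ∀ u ∈ T, v ≠ u → Disjoint (B v) (B u)) →
        (∀ v ∈ T, B v ⊆ K) → T.Finite) ∧
    ¬ ∃ vk : ℕ → (Fin q → ℝ), Function.Injective vk ∧
        (∀ i j : ℕ, i ≠ j → Disjoint (B (vk i)) (B (vk j))) ∧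
        (∀ k, B (vk k) ⊆ K) :=
  stmt18_general N hN C hCcone hCsolid ε hε K hK B hB
end
end
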